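/- Let str be a linear functional on the group algebra of the dihedral group D_n that is a class function on group elements. Suppose additionally str satisfies the n linear constraints (from equation (strT)): str(R_k) = -((ν₀+ν₁)/2)·str(Q_0 + (Q_1+Q_{-1})/2) + (-1)^k·((ν₀-ν₁)/2)·str(Q_{n/2} + (Q_{n/2+1}+Q_{n/2-1})/2) for all k (terms with index n/2 present only when n is even), and when n is even also str(S_{n/2}) = -(1/2)·str((ν₀+ν₁)L_0 - (-1)^{n/2}(ν₀-ν₁)L_{n/2}). Then str is uniquely determined by its values on the rotations S_j with j ≠ n/2, and the space of such functionals has dimension ⌊(n+1)/2⌋. -/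

import Mathlib

open Complex DihedralGroup MonoidAlgebra

/-- `L_p = Σ_k λ^{kp} R_k` in `ℂ[W(I_2(n))]`, with reflections `R_k = sr (-k)`. -/
noncomputable def Lelt (n : ℕ) [NeZero n] (lam : ℂ) (p : ZMod n) :
    MonoidAlgebra ℂ (DihedralGroup n) :=
  ∑ k : ZMod n, (lam ^ ((k.val * p.val : ℕ) : ℤ)) • of ℂ (DihedralGroup n) (sr (-k))

/-- `Q_p = Σ_k λ^{-kp} S_k` in `ℂ[W(I_2(n))]`, with rotations `S_k = r k`. -/
noncomputable def Qelt (n : ℕ) [NeZero n] (lam : ℂ) (p : ZMod n) :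
    MonoidAlgebra ℂ (DihedralGroup n) :=
  ∑ k : ZMod n, (lam ^ (-((k.val * p.val : ℕ) : ℤ))) • of ℂ (DihedralGroup n) (r k)

/-- A functional on `ℂ[W(I_2(n))]` which is a class function on group elements and
satisfies the constraints (strT) and (strS2) of the paper. -/
noncomputable def Admissible (n : ℕ) [NeZero n] (lam ν₀ ν₁ : ℂ)
    (φ : MonoidAlgebra ℂ (DihedralGroup n) →ₗ[ℂ] ℂ) : Prop :=
  let h : ZMod n := ((n / 2 : ℕ) : ZMod n)
  (∀ g g' : DihedralGroup n, φ (of ℂ _ (g' * g * g'⁻¹)) = φ (of ℂ _ g)) ∧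
  (∀ k : ZMod n, φ (of ℂ _ (sr (-k))) =
      -((ν₀ + ν₁) / 2) *
          (φ (Qelt n lam 0) + (φ (Qelt n lam 1) + φ (Qelt n lam (-1))) / 2)
      + (-1 : ℂ) ^ k.val * ((ν₀ - ν₁) / 2) *
          (φ (Qelt n lam h) + (φ (Qelt n lam (h + 1)) + φ (Qelt n lam (h - 1))) / 2)) ∧
  (Even n → φ (of ℂ _ (r h)) =
      -(1 / 2) * φ ((ν₀ + ν₁) • Lelt n lam 0
        - ((-1 : ℂ) ^ (n / 2) * (ν₀ - ν₁)) • Lelt n lam h))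


/-! An admissible functional is a class function, so it is determined by its values on the
rotations, which are even in `j`, and on the reflections. Expanding the `Q_p` in the rotations,
the combination `Q_p + (Q_{p+1} + Q_{p-1})/2` occurring in (strT) becomes
`∑_k λ^{-kp} (1 + cos (2πk/n)) S_k`, in which `S_{n/2}` has weight zero. Hence (strT) expresses
every reflection through the rotations `S_j`, `j ≠ n/2`, and then (strS2) expresses `S_{n/2}`;
a functional vanishing on those rotations vanishes. Conversely, arbitrary even values on the
rotations `S_j`, `j ≠ n/2`, extend by these formulas to an admissible functional: for even `n`
the sign `(-1)^k` is a character of `ℤ/n`, and for odd `n` the term carrying it has the factor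
`ν₀ - ν₁ = 0`. The orbits `{j, -j}` of such rotations are represented by
`0, …, ⌊(n-1)/2⌋`. -/

namespace ZMod

variable {n : ℕ}

theorem neg_natCast_half (heven : Even n) :
    -((n / 2 : ℕ) : ZMod n) = ((n / 2 : ℕ) : ZMod n) := by
  obtain ⟨t, ht⟩ := heven
  rw [neg_eq_iff_add_eq_zero, ← Nat.cast_add, show n / 2 + n / 2 = n by omega, natCast_self]

theorem natAbs_valMinAbs_natCast_half : ((n / 2 : ℕ) : ZMod n).valMinAbs.natAbs = n / 2 := by
  rw [valMinAbs_natCast_of_le_half le_rfl, Int.natAbs_natCast]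

variable [NeZero n]

theorem natAbs_valMinAbs_lt_iff (j : ZMod n) :
    j.valMinAbs.natAbs < (n + 1) / 2 ↔ (Even n → j ≠ ((n / 2 : ℕ) : ZMod n)) := by
  have hle := j.natAbs_valMinAbs_le
  rcases Nat.even_or_odd n with he | ho
  · have h2 : (n + 1) / 2 = n / 2 := by obtain ⟨t, rfl⟩ := he; omega
    have hhalf := natAbs_valMinAbs_eq_natAbs_valMinAbs (a := j) (b := ((n / 2 : ℕ) : ZMod n))
    rw [natAbs_valMinAbs_natCast_half, neg_natCast_half he, or_self] at hhalf
    rw [h2, imp_iff_right he, hle.lt_iff_ne, ne_eq, hhalf]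
  · have h2 : (n + 1) / 2 = n / 2 + 1 := by obtain ⟨t, rfl⟩ := ho; omega
    simp only [h2, Nat.lt_succ_of_le hle, true_iff]
    exact fun he => absurd he (Nat.not_even_iff_odd.2 ho)

section Sign
variable {R : Type*} [Ring R]

theorem neg_one_pow_val_add (heven : Even n) (a b : ZMod n) :
    (-1 : R) ^ (a + b).val = (-1) ^ a.val * (-1) ^ b.val := by
  rw [val_add, neg_one_pow_eq_pow_mod_two, Nat.mod_mod_of_dvd _ heven.two_dvd,
    ← neg_one_pow_eq_pow_mod_two, pow_add]

theorem neg_one_pow_val_neg (heven : Even n) (a : ZMod n) :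
    (-1 : R) ^ (-a).val = (-1) ^ a.val := by
  calc (-1 : R) ^ (-a).val = (-1) ^ (-a).val * ((-1) ^ a.val * (-1) ^ a.val) := by
        rw [← pow_add, Even.neg_one_pow ⟨_, rfl⟩, mul_one]
    _ = (-1) ^ (-a + a).val * (-1) ^ a.val := by rw [neg_one_pow_val_add heven, mul_assoc]
    _ = (-1) ^ a.val := by rw [neg_add_cancel, val_zero, pow_zero, one_mul]

end Sign

theorem stdAddChar_natCast_half (heven : Even n) : stdAddChar ((n / 2 : ℕ) : ZMod n) = -1 := by
  have hn : ((n / 2 : ℕ) : ℂ) * 2 = n := by exact_mod_cast Nat.div_mul_cancel heven.two_dvd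
  rw [← Int.cast_natCast, stdAddChar_coe, Int.cast_natCast, ← exp_pi_mul_I]
  congr 1
  rw [div_eq_iff (Nat.cast_ne_zero.2 (NeZero.ne n)), ← hn]
  ring

theorem stdAddChar_mul_natCast_half (heven : Even n) (k : ZMod n) :
    stdAddChar (k * ((n / 2 : ℕ) : ZMod n)) = (-1) ^ k.val := by
  conv_lhs => rw [← natCast_zmod_val k, ← nsmul_eq_mul]
  rw [AddChar.map_nsmul_eq_pow, stdAddChar_natCast_half heven]

theorem sum_neg_one_pow_val (heven : Even n) : ∑ k : ZMod n, (-1 : ℂ) ^ k.val = 0 := by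
  have hne : ((n / 2 : ℕ) : ZMod n) ≠ 0 := fun h => by
    have := stdAddChar_natCast_half heven
    rw [h, AddChar.map_zero_eq_one] at this
    norm_num at this
  simpa [← stdAddChar_mul_natCast_half heven, mul_comm] using
    AddChar.sum_eq_zero_of_ne_one (isPrimitive_stdAddChar n hne)

end ZMod

theorem DihedralGroup.conj_invariant_of {n : ℕ} {α : Type*} {f : DihedralGroup n → α}
    (hr : ∀ j, f (r (-j)) = f (r j)) (hsr_neg : ∀ k, f (sr (-k)) = f (sr k))
    (hsr_add : ∀ k m, f (sr (k + 2 * m)) = f (sr k)) (g g' : DihedralGroup n) :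
    f (g' * g * g'⁻¹) = f g := by
  rcases g' with m | m <;> rcases g with j | j <;>
    simp only [r_mul_r, r_mul_sr, sr_mul_r, sr_mul_sr, inv_r, inv_sr]
  · ring_nf
  · rw [← hsr_add _ m]; ring_nf
  · rw [← hr j]; ring_nf
  · rw [← hsr_neg j, ← hsr_add (-j) m]; ring_nf

section Expansion
variable {n : ℕ} [NeZero n] {lam : ℂ}

theorem zpow_eq_stdAddChar (hlam : lam = exp (2 * Real.pi * I / n)) (m : ℤ) :
    lam ^ m = ZMod.stdAddChar (m : ZMod n) := by
  rw [ZMod.stdAddChar_coe, hlam, ← exp_int_mul]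
  ring_nf

theorem map_Qelt (hlam : lam = exp (2 * Real.pi * I / n))
    (φ : MonoidAlgebra ℂ (DihedralGroup n) →ₗ[ℂ] ℂ) (p : ZMod n) :
    φ (Qelt n lam p) = ∑ k, ZMod.stdAddChar (-(k * p)) * φ (of ℂ _ (r k)) := by
  simp only [Qelt, map_sum, map_smul, smul_eq_mul, zpow_eq_stdAddChar hlam]
  push_cast [ZMod.natCast_val, ZMod.cast_id]
  rfl

theorem map_Lelt (hlam : lam = exp (2 * Real.pi * I / n))
    (φ : MonoidAlgebra ℂ (DihedralGroup n) →ₗ[ℂ] ℂ) (p : ZMod n) :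
    φ (Lelt n lam p) = ∑ k, ZMod.stdAddChar (k * p) * φ (of ℂ _ (sr (-k))) := by
  simp only [Lelt, map_sum, map_smul, smul_eq_mul, zpow_eq_stdAddChar hlam]
  push_cast [ZMod.natCast_val, ZMod.cast_id]
  rfl

noncomputable def rotWeight (k : ZMod n) : ℂ :=
  1 + (ZMod.stdAddChar (-k) + ZMod.stdAddChar k) / 2

theorem rotWeight_natCast_half (heven : Even n) : rotWeight ((n / 2 : ℕ) : ZMod n) = 0 := by
  rw [rotWeight, AddChar.map_neg_eq_inv, ZMod.stdAddChar_natCast_half heven]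
  norm_num

noncomputable def rotSum (a : ZMod n → ℂ) (p : ZMod n) : ℂ :=
  ∑ k, ZMod.stdAddChar (-(k * p)) * (rotWeight k * a k)

theorem rotSum_congr {a b : ZMod n → ℂ}
    (hab : ∀ k, (Even n → k ≠ ((n / 2 : ℕ) : ZMod n)) → a k = b k) (p : ZMod n) :
    rotSum a p = rotSum b p := by
  refine Finset.sum_congr rfl fun k _ => ?_
  by_cases hk : Even n ∧ k = ((n / 2 : ℕ) : ZMod n)
  · rw [hk.2, rotWeight_natCast_half hk.1, zero_mul, zero_mul]
  · rw [hab k fun he hkh => hk ⟨he, hkh⟩]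

theorem map_Qelt_add_Qelt (hlam : lam = exp (2 * Real.pi * I / n))
    (φ : MonoidAlgebra ℂ (DihedralGroup n) →ₗ[ℂ] ℂ) (p : ZMod n) :
    φ (Qelt n lam p) + (φ (Qelt n lam (p + 1)) + φ (Qelt n lam (p - 1))) / 2
      = rotSum (fun k => φ (of ℂ _ (r k))) p := by
  simp only [map_Qelt hlam, rotSum, rotWeight, ← Finset.sum_add_distrib, Finset.sum_div]
  refine Finset.sum_congr rfl fun k _ => ?_
  rw [show -(k * (p + 1)) = -(k * p) + -k by ring, show -(k * (p - 1)) = -(k * p) + k by ring,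
    AddChar.map_add_eq_mul, AddChar.map_add_eq_mul]
  ring

end Expansion

noncomputable def admissibleSubmodule (n : ℕ) [NeZero n] (lam ν₀ ν₁ : ℂ) :
    Submodule ℂ (MonoidAlgebra ℂ (DihedralGroup n) →ₗ[ℂ] ℂ) where
  carrier := {φ | Admissible n lam ν₀ ν₁ φ}
  add_mem' := by
    rintro φ ψ ⟨hφ₁, hφ₂, hφ₃⟩ ⟨hψ₁, hψ₂, hψ₃⟩
    refine ⟨fun g g' => ?_, fun k => ?_, fun he => ?_⟩
    · simp only [LinearMap.add_apply, hφ₁, hψ₁]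
    · simp only [LinearMap.add_apply, hφ₂ k, hψ₂ k]; ring
    · simp only [LinearMap.add_apply, hφ₃ he, hψ₃ he]; ring
  zero_mem' := ⟨fun _ _ => rfl, fun _ => by simp, fun _ => by simp⟩
  smul_mem' := by
    rintro c φ ⟨hφ₁, hφ₂, hφ₃⟩
    refine ⟨fun g g' => ?_, fun k => ?_, fun he => ?_⟩
    · simp only [LinearMap.smul_apply, hφ₁]
    · simp only [LinearMap.smul_apply, smul_eq_mul, hφ₂ k]; ring
    · simp only [LinearMap.smul_apply, smul_eq_mul, hφ₃ he]; ring

namespace Admissible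
variable {n : ℕ} [NeZero n] {lam ν₀ ν₁ : ℂ}
  {σ : MonoidAlgebra ℂ (DihedralGroup n) →ₗ[ℂ] ℂ}

theorem map_rot_neg (hσ : Admissible n lam ν₀ ν₁ σ) (j : ZMod n) :
    σ (of ℂ _ (r (-j))) = σ (of ℂ _ (r j)) := by
  simpa [sr_mul_r, sr_mul_sr] using hσ.1 (r j) (sr 0)

theorem map_rot_natAbs_valMinAbs (hσ : Admissible n lam ν₀ ν₁ σ) (j : ZMod n) :
    σ (of ℂ _ (r (j.valMinAbs.natAbs : ZMod n))) = σ (of ℂ _ (r j)) := by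
  rw [ZMod.natCast_natAbs_valMinAbs]
  split_ifs
  · rfl
  · exact hσ.map_rot_neg j

theorem eq_zero_of_map_rot_eq_zero (hlam : lam = exp (2 * Real.pi * I / n))
    (hσ : Admissible n lam ν₀ ν₁ σ)
    (h0 : ∀ j : ZMod n, (Even n → j ≠ ((n / 2 : ℕ) : ZMod n)) → σ (of ℂ _ (r j)) = 0) :
    σ = 0 := by
  obtain ⟨-, hrefl, hhalf⟩ := hσ
  have hQ (p : ZMod n) : rotSum (fun k => σ (of ℂ _ (r k))) p = 0 := by
    rw [rotSum_congr (b := 0) h0]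
    simp [rotSum]
  have hsr (k : ZMod n) : σ (of ℂ _ (sr k)) = 0 := by
    have hA := map_Qelt_add_Qelt hlam σ 0
    rw [zero_add, zero_sub] at hA
    rw [← neg_neg k, hrefl, hA, map_Qelt_add_Qelt hlam, hQ, hQ]
    ring
  have hL (p : ZMod n) : σ (Lelt n lam p) = 0 := by
    simp only [map_Lelt hlam, hsr, mul_zero, Finset.sum_const_zero]
  refine (MonoidAlgebra.basis _ ℂ).ext fun g => ?_
  rcases g with j | k
  · by_cases hj : Even n ∧ j = ((n / 2 : ℕ) : ZMod n)
    · obtain ⟨he, rfl⟩ := hj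
      simpa [hL] using hhalf he
    · exact h0 j fun he hjh => hj ⟨he, hjh⟩
  · exact hsr k

end Admissible

section Extension
variable {n : ℕ} [NeZero n] (ν₀ ν₁ : ℂ) (a : ZMod n → ℂ)

noncomputable def reflValue (k : ZMod n) : ℂ :=
  -((ν₀ + ν₁) / 2) * rotSum a 0
    + (-1) ^ k.val * ((ν₀ - ν₁) / 2) * rotSum a ((n / 2 : ℕ) : ZMod n)

-- the value that (strS2) forces, by `sum_reflValue` and `sum_neg_one_pow_val_mul_reflValue`
noncomputable def halfRotValue : ℂ :=
  n * ((ν₀ + ν₁) / 2) ^ 2 * rotSum a 0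
    + (-1) ^ (n / 2) * n * ((ν₀ - ν₁) / 2) ^ 2 * rotSum a ((n / 2 : ℕ) : ZMod n)

noncomputable def extensionValue : DihedralGroup n → ℂ
  | r j => if Even n ∧ j = ((n / 2 : ℕ) : ZMod n) then halfRotValue ν₀ ν₁ a else a j
  | sr k => reflValue ν₀ ν₁ a k

noncomputable def admissibleExtension : MonoidAlgebra ℂ (DihedralGroup n) →ₗ[ℂ] ℂ :=
  (MonoidAlgebra.basis _ ℂ).constr ℂ (extensionValue ν₀ ν₁ a)

theorem admissibleExtension_of (g : DihedralGroup n) :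
    admissibleExtension ν₀ ν₁ a (of ℂ _ g) = extensionValue ν₀ ν₁ a g :=
  (MonoidAlgebra.basis _ ℂ).constr_basis ℂ _ g

variable {ν₀ ν₁}

theorem sum_reflValue (heven : Even n) :
    ∑ k, reflValue ν₀ ν₁ a k = n * (-((ν₀ + ν₁) / 2) * rotSum a 0) := by
  simp only [reflValue, Finset.sum_add_distrib, ← Finset.sum_mul, ZMod.sum_neg_one_pow_val heven,
    Finset.sum_const, Finset.card_univ, ZMod.card, nsmul_eq_mul]
  ring

theorem sum_neg_one_pow_val_mul_reflValue (heven : Even n) :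
    ∑ k, (-1) ^ k.val * reflValue ν₀ ν₁ a k
      = n * ((ν₀ - ν₁) / 2 * rotSum a ((n / 2 : ℕ) : ZMod n)) := by
  have hsq (k : ZMod n) : (-1 : ℂ) ^ k.val * (-1) ^ k.val = 1 := by
    rw [← pow_add, Even.neg_one_pow ⟨_, rfl⟩]
  simp only [reflValue, mul_add, ← mul_assoc, hsq, one_mul, Finset.sum_add_distrib,
    ← Finset.sum_mul, ZMod.sum_neg_one_pow_val heven, Finset.sum_const, Finset.card_univ,
    ZMod.card, nsmul_eq_mul]
  ring

theorem reflValue_eq (hodd : Odd n → ν₀ = ν₁) {j k : ZMod n}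
    (hjk : Even n → (-1 : ℂ) ^ j.val = (-1) ^ k.val) :
    reflValue ν₀ ν₁ a j = reflValue ν₀ ν₁ a k := by
  rcases Nat.even_or_odd n with he | ho
  · rw [reflValue, reflValue, hjk he]
  · simp [reflValue, hodd ho]

theorem reflValue_neg (hodd : Odd n → ν₀ = ν₁) (k : ZMod n) :
    reflValue ν₀ ν₁ a (-k) = reflValue ν₀ ν₁ a k :=
  reflValue_eq a hodd fun he => ZMod.neg_one_pow_val_neg he k

variable {a}

theorem extensionValue_conj (hodd : Odd n → ν₀ = ν₁) (ha : ∀ j, a (-j) = a j)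
    (g g' : DihedralGroup n) :
    extensionValue ν₀ ν₁ a (g' * g * g'⁻¹) = extensionValue ν₀ ν₁ a g := by
  refine DihedralGroup.conj_invariant_of (fun j => ?_) (reflValue_neg a hodd)
    (fun k m => reflValue_eq a hodd fun he => ?_) g g'
  · have hhalf :
        (Even n ∧ -j = ((n / 2 : ℕ) : ZMod n)) ↔ (Even n ∧ j = ((n / 2 : ℕ) : ZMod n)) :=
      and_congr_right fun he => by rw [neg_eq_iff_eq_neg, ZMod.neg_natCast_half he]
    simp only [extensionValue, hhalf, ha]
  · rw [ZMod.neg_one_pow_val_add he, two_mul, ZMod.neg_one_pow_val_add he, ← pow_add,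
      Even.neg_one_pow ⟨_, rfl⟩, mul_one]

theorem admissibleExtension_admissible {lam : ℂ} (hlam : lam = exp (2 * Real.pi * I / n))
    (hodd : Odd n → ν₀ = ν₁) (ha : ∀ j, a (-j) = a j) :
    Admissible n lam ν₀ ν₁ (admissibleExtension ν₀ ν₁ a) := by
  have hrot : rotSum (fun k => admissibleExtension ν₀ ν₁ a (of ℂ _ (r k))) = rotSum a := by
    ext p
    refine rotSum_congr (fun k hk => ?_) p
    rw [admissibleExtension_of, extensionValue, if_neg fun h => hk h.1 h.2]
  have hsr (k : ZMod n) :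
      admissibleExtension ν₀ ν₁ a (of ℂ _ (sr (-k))) = reflValue ν₀ ν₁ a k := by
    rw [admissibleExtension_of]
    exact reflValue_neg a hodd k
  refine ⟨fun g g' => ?_, fun k => ?_, fun heven => ?_⟩
  · simp only [admissibleExtension_of, extensionValue_conj hodd ha]
  · have hA := map_Qelt_add_Qelt hlam (admissibleExtension ν₀ ν₁ a) 0
    rw [zero_add, zero_sub] at hA
    rw [hA, map_Qelt_add_Qelt hlam, hrot, hsr, reflValue]
  · rw [map_sub, map_smul, map_smul, map_Lelt hlam, map_Lelt hlam, admissibleExtension_of,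
      extensionValue, if_pos ⟨heven, rfl⟩]
    simp only [mul_zero, AddChar.map_zero_eq_one, one_mul, ZMod.stdAddChar_mul_natCast_half heven,
      hsr, sum_reflValue a heven, sum_neg_one_pow_val_mul_reflValue a heven, halfRotValue,
      smul_eq_mul]
    ring

end Extension

section Dimension
variable {n : ℕ} [NeZero n] {lam ν₀ ν₁ : ℂ}

variable (n lam ν₀ ν₁) in
noncomputable def rotValues :
    admissibleSubmodule n lam ν₀ ν₁ →ₗ[ℂ] (Fin ((n + 1) / 2) → ℂ) where
  toFun σ i := (σ : MonoidAlgebra ℂ (DihedralGroup n) →ₗ[ℂ] ℂ) (of ℂ _ (r (i : ℕ)))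
  map_add' _ _ := rfl
  map_smul' _ _ := rfl

theorem rotValues_injective (hlam : lam = exp (2 * Real.pi * I / n)) :
    Function.Injective (rotValues n lam ν₀ ν₁) := by
  rw [← LinearMap.ker_eq_bot, LinearMap.ker_eq_bot']
  intro σ hσ
  refine Subtype.ext (σ.2.eq_zero_of_map_rot_eq_zero hlam fun j hj => ?_)
  rw [← σ.2.map_rot_natAbs_valMinAbs]
  exact congrFun hσ ⟨_, (ZMod.natAbs_valMinAbs_lt_iff j).2 hj⟩

theorem rotValues_surjective (hlam : lam = exp (2 * Real.pi * I / n))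
    (hodd : Odd n → ν₀ = ν₁) : Function.Surjective (rotValues n lam ν₀ ν₁) := by
  intro v
  let a (j : ZMod n) : ℂ := Function.extend Fin.val v 0 j.valMinAbs.natAbs
  have ha (j : ZMod n) : a (-j) = a j := by simp only [a, ZMod.natAbs_valMinAbs_neg]
  refine ⟨⟨_, admissibleExtension_admissible hlam hodd ha⟩, funext fun i => ?_⟩
  have hi : ((i : ℕ) : ZMod n).valMinAbs.natAbs = i := by
    rw [ZMod.valMinAbs_natCast_of_le_half (by omega), Int.natAbs_natCast]
  have hfree := (ZMod.natAbs_valMinAbs_lt_iff ((i : ℕ) : ZMod n)).1 (by rw [hi]; exact i.2)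
  change admissibleExtension ν₀ ν₁ a (of ℂ _ (r (i : ℕ))) = v i
  rw [admissibleExtension_of, extensionValue, if_neg fun h => hfree h.1 h.2]
  simp only [a, hi, Fin.val_injective.extend_apply]

theorem finrank_admissibleSubmodule (hlam : lam = exp (2 * Real.pi * I / n))
    (hodd : Odd n → ν₀ = ν₁) :
    Module.finrank ℂ (admissibleSubmodule n lam ν₀ ν₁) = (n + 1) / 2 := by
  rw [(LinearEquiv.ofBijective _
      ⟨rotValues_injective hlam, rotValues_surjective hlam hodd⟩).finrank_eq,
    Module.finrank_fin_fun]

end Dimension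

theorem supertrace_count_I2n_general (n : ℕ) [NeZero n] (ν₀ ν₁ : ℂ)
    (hodd : Odd n → ν₀ = ν₁)
    (lam : ℂ) (hlam : lam = Complex.exp (2 * Real.pi * I / n)) :
    (∀ φ ψ : MonoidAlgebra ℂ (DihedralGroup n) →ₗ[ℂ] ℂ,
      Admissible n lam ν₀ ν₁ φ → Admissible n lam ν₀ ν₁ ψ →
      (∀ j : ZMod n, (Even n → j ≠ ((n / 2 : ℕ) : ZMod n)) →
        φ (of ℂ _ (r j)) = ψ (of ℂ _ (r j))) →
      φ = ψ) ∧
    ∃ S : Submodule ℂ (MonoidAlgebra ℂ (DihedralGroup n) →ₗ[ℂ] ℂ),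
      (∀ φ, φ ∈ S ↔ Admissible n lam ν₀ ν₁ φ) ∧
      Module.finrank ℂ S = (n + 1) / 2 := by
  refine ⟨fun φ ψ hφ hψ hφψ => ?_, admissibleSubmodule n lam ν₀ ν₁, fun _ => Iff.rfl,
    finrank_admissibleSubmodule hlam hodd⟩
  have hsub : Admissible n lam ν₀ ν₁ (φ - ψ) :=
    Submodule.sub_mem (admissibleSubmodule n lam ν₀ ν₁) hφ hψ
  refine sub_eq_zero.1 (hsub.eq_zero_of_map_rot_eq_zero hlam fun j hj => ?_)
  rw [LinearMap.sub_apply, hφψ j hj, sub_self]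

/-- Every admissible functional (class function satisfying (strT), (strS2)) is
determined by its values on the rotations `S_j`, `j ≠ n/2`, and the space of such
functionals has dimension `⌊(n+1)/2⌋`. -/
theorem supertrace_count_I2n (n : ℕ) (hn : 1 ≤ n) [NeZero n] (ν₀ ν₁ : ℂ)
    (hodd : Odd n → ν₀ = ν₁)
    (lam : ℂ) (hlam : lam = Complex.exp (2 * Real.pi * I / n)) :
    (∀ φ ψ : MonoidAlgebra ℂ (DihedralGroup n) →ₗ[ℂ] ℂ,
      Admissible n lam ν₀ ν₁ φ → Admissible n lam ν₀ ν₁ ψ →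
      (∀ j : ZMod n, (Even n → j ≠ ((n / 2 : ℕ) : ZMod n)) →
        φ (of ℂ _ (r j)) = ψ (of ℂ _ (r j))) →
      φ = ψ) ∧
    ∃ S : Submodule ℂ (MonoidAlgebra ℂ (DihedralGroup n) →ₗ[ℂ] ℂ),
      (∀ φ, φ ∈ S ↔ Admissible n lam ν₀ ν₁ φ) ∧
      Module.finrank ℂ S = (n + 1) / 2 :=
  supertrace_count_I2n_general n ν₀ ν₁ hodd lam hlam
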